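/- arXiv:cs/0508024 — 2 statements merged into one kernel-verified Lean document; each statement's English description precedes it below -/
import Mathlib

section
/- Let q = 2^h, h > p+1, m ≥ 2, k = 0, r = 1. The Class II code C = ∪_{π} { b'_π + a : a ∈ ZRM_{2^h}^p(1,m) }, where π ranges over all permutations of {0,...,m-1} and b'_π is the vector associated with 2^{h-1}·Σ_{α=0}^{m-2} x_{π(α)} x_{π(α+1)}, is contained in ZRM_{2^h}^{p+1}(2,m), and consequently for any two distinct codewords u, v ∈ C, the Hamming distance between u and v is at least 2^{m-2} and the Lee distance is at least 2^{m-1+p}. -/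
open Finset

/-- The binary expansion of `i`, as a point of `ℤ₂^m`. -/
def bits (m : ℕ) (i : ℕ) : Fin m → ZMod 2 := fun j => if Nat.testBit i j.val then 1 else 0

/-- Admissibility condition on ANF coefficients for `ZRM_{2^h}^p(r,m)`. -/
def zrmCond (h p r m : ℕ) (c : Finset (Fin m) → ZMod (2 ^ h)) : Prop :=
  ∀ S : Finset (Fin m),
    (r < S.card → c S = 0) ∧
    (r - p < S.card → S.card ≤ r →
      ∃ u : ZMod (2 ^ h), c S = 2 ^ (S.card - (r - p)) * u)

/-- The vector of length `2^m` associated with ANF coefficients `c`. -/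
def anfVec (h m : ℕ) (c : Finset (Fin m) → ZMod (2 ^ h)) : Fin (2 ^ m) → ZMod (2 ^ h) :=
  fun i => ∑ S : Finset (Fin m), c S * ∏ α ∈ S, ((bits m i.val α).val : ZMod (2 ^ h))

/-- The code `ZRM_{2^h}^p(r,m)`. -/
def ZRM (h p r m : ℕ) : Set (Fin (2 ^ m) → ZMod (2 ^ h)) :=
  {v | ∃ c : Finset (Fin m) → ZMod (2 ^ h), zrmCond h p r m c ∧ v = anfVec h m c}

/-- The vector associated with the quadratic form `2^{h-1}·∑_{α=0}^{m-2} x_{π(α)}x_{π(α+1)}`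
for a permutation `π` of `{0,…,m-1}`. -/
def bVec' (h m : ℕ) (π : ℕ → Fin m) : Fin (2 ^ m) → ZMod (2 ^ h) :=
  fun i => ((2 ^ (h - 1) *
    ∑ α ∈ Finset.range (m - 1),
      (bits m i.val (π α)).val * (bits m i.val (π (α + 1))).val : ℕ) : ZMod (2 ^ h))

/-- Hamming distance. -/
def distH {n q : ℕ} (u v : Fin n → ZMod q) : ℕ := (Finset.univ.filter fun i => u i ≠ v i).card

/-- Lee weight. -/
def wtL {n q : ℕ} (v : Fin n → ZMod q) : ℕ := ∑ i : Fin n, min (v i).val (q - (v i).val)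

/-!
Each codeword `b'_π + a` of the Class II code lies in `ZRM_{2^h}^{p+1}(2, m)`: `a` does since
`ZRM^p(1, m) ⊆ ZRM^{p+1}(2, m)`, and `b'_π` has only quadratic monomials, whose coefficient
`2^{h-1}` is divisible by `2^{p+1}`. Since that code is an additive group, the distance bounds
are its minimum weights. Write a nonzero ANF as `2^t k` with `k mod 2 ≠ 0`; the divisibility
conditions of `ZRM^p(r, m)` force `k mod 2` to have degree at most `min r (r - p + t)`, so by the
Reed–Muller bound it is nonzero at `2^{m-r}` points at least, and there the codeword is `2^t`
times a unit of `ℤ/2^h`, of Lee weight at least `2^t`.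
-/

section BooleanANF

variable {m : ℕ}

def anfEval (e : Finset (Fin m) → ZMod 2) (x : Fin m → ZMod 2) : ZMod 2 :=
  ∑ S, e S * ∏ α ∈ S, x α

def cofactor₀ (e : Finset (Fin (m + 1)) → ZMod 2) : Finset (Fin m) → ZMod 2 :=
  fun S => e (S.map (Fin.succEmb m))

def derivative₀ (e : Finset (Fin (m + 1)) → ZMod 2) : Finset (Fin m) → ZMod 2 :=
  fun S => e (insert 0 (S.map (Fin.succEmb m)))

theorem Finset.powerset_map {α β : Type*} (f : α ↪ β) (s : Finset α) :
    (s.map f).powerset = s.powerset.map (mapEmbedding f).toEmbedding := by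
  ext T
  simp [subset_map_iff, eq_comm]

theorem Fin.sum_univ_finset_succ {M : Type*} [AddCommMonoid M] (f : Finset (Fin (m + 1)) → M) :
    ∑ T, f T = ∑ S : Finset (Fin m), f (S.map (Fin.succEmb m)) +
      ∑ S : Finset (Fin m), f (insert 0 (S.map (Fin.succEmb m))) := by
  rw [← powerset_univ, Fin.univ_succ, cons_eq_insert, sum_powerset_insert (by simp)]
  simp only [powerset_map, powerset_univ, sum_map, RelEmbedding.coe_toEmbedding,
    mapEmbedding_apply]
  rfl

theorem Finset.exists_eq_map_succEmb_or_eq_insert_zero (T : Finset (Fin (m + 1))) :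
    ∃ S : Finset (Fin m), T = S.map (Fin.succEmb m) ∨ T = insert 0 (S.map (Fin.succEmb m)) := by
  obtain ⟨S, -, hS⟩ := subset_map_iff.1 (show T.erase 0 ⊆ univ.map (Fin.succEmb m) from
    fun a ha => by simpa [Fin.exists_succ_eq] using ne_of_mem_erase ha)
  refine ⟨S, ?_⟩
  by_cases h0 : (0 : Fin (m + 1)) ∈ T
  · exact Or.inr (by rw [← hS, insert_erase h0])
  · exact Or.inl (by rw [← hS, erase_eq_of_notMem h0])

theorem eq_zero_of_cofactor₀_of_derivative₀ {e : Finset (Fin (m + 1)) → ZMod 2}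
    (h₀ : cofactor₀ e = 0) (h₁ : derivative₀ e = 0) : e = 0 := by
  funext T
  obtain ⟨S, rfl | rfl⟩ := T.exists_eq_map_succEmb_or_eq_insert_zero
  exacts [congrFun h₀ S, congrFun h₁ S]

@[simp]
theorem anfEval_zero (x : Fin m → ZMod 2) : anfEval 0 x = 0 := by
  simp [anfEval]

theorem anfEval_add (e f : Finset (Fin m) → ZMod 2) (x : Fin m → ZMod 2) :
    anfEval (e + f) x = anfEval e x + anfEval f x := by
  simp only [anfEval, Pi.add_apply, add_mul, sum_add_distrib]

theorem anfEval_cons (e : Finset (Fin (m + 1)) → ZMod 2) (b : ZMod 2) (y : Fin m → ZMod 2) :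
    anfEval e (Fin.cons b y) = anfEval (cofactor₀ e) y + b * anfEval (derivative₀ e) y := by
  rw [anfEval, Fin.sum_univ_finset_succ, anfEval, anfEval, mul_sum]
  congr 1 <;> refine sum_congr rfl fun S _ => ?_
  · simp [cofactor₀, prod_map]
  · rw [prod_insert (by simp), prod_map]
    simp only [derivative₀, Fin.coe_succEmb, Fin.cons_zero, Fin.cons_succ]
    ring

theorem card_anfEval_ne_zero_succ (e : Finset (Fin (m + 1)) → ZMod 2) :
    #{x | anfEval e x ≠ 0} = #{y | anfEval (cofactor₀ e) y ≠ 0} +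
      #{y | anfEval (cofactor₀ e + derivative₀ e) y ≠ 0} := by
  simp only [card_filter]
  rw [← (Fin.consEquiv fun _ => ZMod 2).sum_comp, Fintype.sum_prod_type,
    show (univ : Finset (ZMod 2)) = {0, 1} from rfl, sum_pair zero_ne_one]
  simp [Fin.consEquiv, anfEval_cons, anfEval_add]

/-- The minimum distance `2 ^ (m - D)` of the binary Reed–Muller code of order `D`. -/
theorem two_pow_le_two_pow_mul_card_anfEval_ne_zero {e : Finset (Fin m) → ZMod 2} {D : ℕ}
    (he : e ≠ 0) (hdeg : ∀ S, D < #S → e S = 0) :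
    2 ^ m ≤ 2 ^ D * #{x | anfEval e x ≠ 0} := by
  induction m generalizing D with
  | zero =>
    have hS : ∀ S : Finset (Fin 0), S = ∅ := fun S => Subsingleton.elim _ _
    have hempty : e ∅ ≠ 0 := fun h => he (funext fun S => by rw [hS S, h]; rfl)
    have hx : ∀ x, anfEval e x = e ∅ := fun x => by simp [anfEval, univ_unique, hS default]
    simp [hx, hempty, Nat.one_le_two_pow]
  | succ m ih =>
    rw [card_anfEval_ne_zero_succ]
    set e₀ := cofactor₀ e
    set e₁ := derivative₀ e
    have hdeg₀ : ∀ S, D < #S → e₀ S = 0 := fun S hS => hdeg _ (by simpa using hS)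
    have hdeg₁ : ∀ S, D ≤ #S → e₁ S = 0 := fun S hS => hdeg _ (by
      rw [card_insert_of_notMem (by simp), card_map]; omega)
    have hdeg₀₁ : ∀ S, D < #S → (e₀ + e₁) S = 0 := fun S hS => by
      simp [hdeg₀ S hS, hdeg₁ S hS.le]
    -- if one cofactor vanishes, the other one is the derivative, whose degree is smaller
    have of_derivative (h₁ : e₁ ≠ 0) :
        2 ^ (m + 1) ≤ 2 ^ D * #{y | anfEval e₁ y ≠ 0} := by
      obtain ⟨D, rfl⟩ : ∃ D', D = D' + 1 := Nat.exists_eq_succ_of_ne_zero fun hD =>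
        h₁ (funext fun S => hdeg₁ S (by omega))
      have := ih h₁ fun S hS => hdeg₁ S hS
      rw [pow_succ, pow_succ, mul_right_comm]
      exact Nat.mul_le_mul_right 2 this
    by_cases h₀ : e₀ = 0
    · have h₁ : e₁ ≠ 0 := fun h₁ => he (eq_zero_of_cofactor₀_of_derivative₀ h₀ h₁)
      simpa [h₀] using of_derivative h₁
    by_cases h₀₁ : e₀ + e₁ = 0
    · have h₀₁' : e₀ = e₁ := CharTwo.add_eq_zero.1 h₀₁
      rw [h₀₁, h₀₁']
      simpa using of_derivative (h₀₁' ▸ h₀)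
    calc 2 ^ (m + 1) = 2 ^ m + 2 ^ m := by ring
      _ ≤ _ := by rw [mul_add]; exact add_le_add (ih h₀ hdeg₀) (ih h₀₁ hdeg₀₁)

end BooleanANF

theorem bits_bijective (m : ℕ) : Function.Bijective fun i : Fin (2 ^ m) => bits m i := by
  have : (fun i : Fin (2 ^ m) => bits m i) =
      fun i => (finFunctionFinEquiv.symm i : Fin m → ZMod 2) := by
    funext i j
    apply Fin.ext
    rw [finFunctionFinEquiv_symm_apply_val, bits, Nat.testBit_eq_decide_div_mod_eq]
    rcases Nat.mod_two_eq_zero_or_one (i / 2 ^ (j : ℕ)) with h | h <;> rw [h] <;> rfl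
  rw [this]
  exact finFunctionFinEquiv.symm.bijective

theorem card_filter_bits {m : ℕ} (P : (Fin m → ZMod 2) → Prop) [DecidablePred P] :
    #{i : Fin (2 ^ m) | P (bits m i)} = #{x | P x} :=
  card_equiv (Equiv.ofBijective _ (bits_bijective m)) (by simp)

section TwoAdic

variable {h t : ℕ}

theorem map_anfVec {m : ℕ} (ρ : ZMod (2 ^ h) →+* ZMod 2) (c : Finset (Fin m) → ZMod (2 ^ h))
    (i : Fin (2 ^ m)) : ρ (anfVec h m c i) = anfEval (fun S => ρ (c S)) (bits m i) := by
  simp [anfVec, anfEval, map_sum, map_mul, map_prod]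

theorem two_pow_dvd_val_two_pow_mul (ht : t ≤ h) (y : ZMod (2 ^ h)) :
    2 ^ t ∣ ((2 : ZMod (2 ^ h)) ^ t * y).val := by
  have : (2 : ZMod (2 ^ h)) ^ t * y = ((2 ^ t * y.val : ℕ) : ZMod (2 ^ h)) := by
    push_cast; rw [ZMod.natCast_zmod_val]
  rw [this, ZMod.val_natCast]
  exact (Nat.dvd_mod_iff (pow_dvd_pow 2 ht)).2 (dvd_mul_right _ _)

theorem two_pow_mul_ne_zero_of_map_ne_zero (ρ : ZMod (2 ^ h) →+* ZMod 2) (ht : t < h)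
    {y : ZMod (2 ^ h)} (hy : ρ y ≠ 0) : (2 : ZMod (2 ^ h)) ^ t * y ≠ 0 := by
  intro h0
  apply hy
  have hdvd : 2 ^ t * 2 ∣ 2 ^ t * y.val := by
    refine (pow_succ 2 t ▸ pow_dvd_pow 2 ht).trans ((ZMod.natCast_eq_zero_iff _ _).1 ?_)
    push_cast; rwa [ZMod.natCast_zmod_val]
  obtain ⟨z, hz⟩ := Nat.dvd_of_mul_dvd_mul_left (by positivity) hdvd
  rw [← ZMod.natCast_zmod_val y, hz, map_natCast]
  push_cast
  rw [show (2 : ZMod 2) = 0 from rfl, zero_mul]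

theorem map_eq_zero_of_two_pow_mul_eq (ρ : ZMod (2 ^ h) →+* ZMod 2) {j : ℕ} (ht : t < h)
    (htj : t < j) {y u : ZMod (2 ^ h)} (hyu : 2 ^ t * y = 2 ^ j * u) : ρ y = 0 := by
  by_contra hy
  refine two_pow_mul_ne_zero_of_map_ne_zero ρ ht (y := y - 2 ^ (j - t) * u) ?_ ?_
  · rwa [map_sub, map_mul, map_pow, map_ofNat, show (2 : ZMod 2) = 0 from rfl,
      zero_pow (by omega), zero_mul, sub_zero]
  · rw [mul_sub, hyu, ← mul_assoc, ← pow_add, Nat.add_sub_cancel' htj.le, sub_self]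

theorem two_pow_le_min_val (ht : t ≤ h) {x : ZMod (2 ^ h)} (hx : x ≠ 0)
    (hdvd : 2 ^ t ∣ x.val) :
    2 ^ t ≤ min x.val (2 ^ h - x.val) := by
  have hpos : 0 < x.val := Nat.pos_of_ne_zero ((ZMod.val_ne_zero x).2 hx)
  have hlt : x.val < 2 ^ h := ZMod.val_lt x
  refine le_min (Nat.le_of_dvd hpos hdvd) (Nat.le_of_dvd (by omega) ?_)
  exact Nat.dvd_sub (pow_dvd_pow 2 ht) hdvd

theorem exists_eq_two_pow_mul {ι : Type*} (ρ : ZMod (2 ^ h) →+* ZMod 2)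
    {c : ι → ZMod (2 ^ h)} (hc : c ≠ 0) :
    ∃ t < h, ∃ k : ι → ZMod (2 ^ h), (∀ i, c i = 2 ^ t * k i) ∧ ∃ i, ρ (k i) ≠ 0 := by
  classical
  let P n := ∀ i, 2 ^ n ∣ (c i).val
  set t := Nat.findGreatest P h
  have hdvd : P t := Nat.findGreatest_spec (Nat.zero_le h) fun i => by simp
  have ht : t < h := by
    refine lt_of_le_of_ne (Nat.findGreatest_le h) fun hth => hc (funext fun i => ?_)
    rw [Pi.zero_apply, ← ZMod.val_eq_zero]
    exact Nat.eq_zero_of_dvd_of_lt (hdvd i) ((ZMod.val_lt _).trans_eq (by rw [hth]))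
  obtain ⟨i, hi⟩ : ∃ i, ¬ 2 ^ (t + 1) ∣ (c i).val := by
    simpa [P] using Nat.findGreatest_is_greatest (Nat.lt_succ_self t) ht
  refine ⟨t, ht, fun i => (((c i).val / 2 ^ t : ℕ) : ZMod (2 ^ h)), fun i => ?_, i, ?_⟩
  · conv_lhs => rw [← ZMod.natCast_zmod_val (c i), ← Nat.mul_div_cancel' (hdvd i)]
    push_cast; rfl
  · rwa [map_natCast, Ne, ZMod.natCast_eq_zero_iff, Nat.dvd_div_iff_mul_dvd (hdvd i), ← pow_succ]

end TwoAdic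

theorem Nat.two_pow_sub_le_of_two_pow_le_mul {a b n : ℕ} (h : 2 ^ a ≤ 2 ^ b * n) :
    2 ^ (a - b) ≤ n := by
  rcases le_total b a with hba | hab
  · refine Nat.le_of_mul_le_mul_left ?_ (Nat.two_pow_pos b)
    rwa [← pow_add, Nat.add_sub_cancel' hba]
  · rw [Nat.sub_eq_zero_of_le hab, pow_zero, Nat.one_le_iff_ne_zero]
    rintro rfl
    simp at h

section ZRM

variable {h p r m : ℕ}

def zrmCoeffs (h p r m : ℕ) : AddSubgroup (Finset (Fin m) → ZMod (2 ^ h)) where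
  carrier := {c | zrmCond h p r m c}
  zero_mem' _ := ⟨fun _ => rfl, fun _ _ => ⟨0, by simp⟩⟩
  add_mem' {c d} hc hd S := by
    refine ⟨fun hS => by simp [(hc S).1 hS, (hd S).1 hS], fun h₁ h₂ => ?_⟩
    obtain ⟨u, hu⟩ := (hc S).2 h₁ h₂
    obtain ⟨v, hv⟩ := (hd S).2 h₁ h₂
    exact ⟨u + v, by rw [Pi.add_apply, hu, hv, mul_add]⟩
  neg_mem' {c} hc S := by
    refine ⟨fun hS => by simp [(hc S).1 hS], fun h₁ h₂ => ?_⟩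
    obtain ⟨u, hu⟩ := (hc S).2 h₁ h₂
    exact ⟨-u, by rw [Pi.neg_apply, hu, mul_neg]⟩

def anfVecHom (h m : ℕ) : (Finset (Fin m) → ZMod (2 ^ h)) →+ (Fin (2 ^ m) → ZMod (2 ^ h)) :=
  AddMonoidHom.mk' (anfVec h m) fun c d => by
    funext i
    simp only [anfVec, Pi.add_apply, add_mul, sum_add_distrib]

theorem ZRM_eq_map : ZRM h p r m = (zrmCoeffs h p r m).map (anfVecHom h m) := by
  ext v
  constructor <;> exact fun ⟨c, hc, hv⟩ => ⟨c, hc, hv.symm⟩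

theorem add_mem_ZRM {u v : Fin (2 ^ m) → ZMod (2 ^ h)} (hu : u ∈ ZRM h p r m)
    (hv : v ∈ ZRM h p r m) : u + v ∈ ZRM h p r m := by
  rw [ZRM_eq_map] at *
  exact add_mem hu hv

theorem sub_mem_ZRM {u v : Fin (2 ^ m) → ZMod (2 ^ h)} (hu : u ∈ ZRM h p r m)
    (hv : v ∈ ZRM h p r m) : u - v ∈ ZRM h p r m := by
  rw [ZRM_eq_map] at *
  exact sub_mem hu hv

theorem anfVec_single (S : Finset (Fin m)) (a : ZMod (2 ^ h)) (i : Fin (2 ^ m)) :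
    anfVec h m (Pi.single S a) i = a * ∏ α ∈ S, ((bits m i α).val : ZMod (2 ^ h)) := by
  simp [anfVec, Pi.single_apply]

theorem anfVec_const_mul (a : ZMod (2 ^ h)) (k : Finset (Fin m) → ZMod (2 ^ h))
    (i : Fin (2 ^ m)) :
    anfVec h m (fun S => a * k S) i = a * anfVec h m k i := by
  simp [anfVec, mul_sum, mul_assoc]

theorem zrmCoeffs_le_succ_succ : zrmCoeffs h p r m ≤ zrmCoeffs h (p + 1) (r + 1) m := by
  intro c hc S
  refine ⟨fun hS => (hc S).1 (by omega), fun h₁ h₂ => ?_⟩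
  rw [Nat.add_sub_add_right] at h₁ ⊢
  rcases h₂.lt_or_eq with h₂ | h₂
  · exact (hc S).2 h₁ (by omega)
  · exact ⟨0, by rw [(hc S).1 (by omega), mul_zero]⟩

theorem ZRM_subset_succ_succ : ZRM h p r m ⊆ ZRM h (p + 1) (r + 1) m := by
  rw [ZRM_eq_map, ZRM_eq_map]
  exact AddSubgroup.map_mono zrmCoeffs_le_succ_succ

theorem single_two_pow_mem_zrmCoeffs {S : Finset (Fin m)} {j : ℕ} (hS : #S ≤ r)
    (hj : #S - (r - p) ≤ j) : Pi.single S (2 ^ j) ∈ zrmCoeffs h p r m := by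
  intro T
  by_cases hT : T = S
  · subst hT
    refine ⟨fun h₁ => absurd hS (by omega), fun _ _ => ⟨2 ^ (j - (#T - (r - p))), ?_⟩⟩
    rw [Pi.single_eq_same, ← pow_add, Nat.add_sub_cancel' hj]
  · rw [Pi.single_eq_of_ne hT]
    exact ⟨fun _ => rfl, fun _ _ => ⟨0, by rw [mul_zero]⟩⟩

theorem weight_bounds_anfVec_two_pow_mul {t D : ℕ} (ρ : ZMod (2 ^ h) →+* ZMod 2) (ht : t < h)
    {k : Finset (Fin m) → ZMod (2 ^ h)} (hk : (fun S => ρ (k S)) ≠ 0)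
    (hdeg : ∀ S, D < #S → ρ (k S) = 0) :
    2 ^ m ≤ 2 ^ D * #{i | anfVec h m (fun S => 2 ^ t * k S) i ≠ 0} ∧
      2 ^ m * 2 ^ t ≤ 2 ^ D * wtL (anfVec h m (fun S => 2 ^ t * k S)) := by
  set v := anfVec h m (fun S => 2 ^ t * k S)
  set T := ({i | anfEval (fun S => ρ (k S)) (bits m i) ≠ 0} : Finset (Fin (2 ^ m)))
  have hRM : 2 ^ m ≤ 2 ^ D * #T := by
    rw [card_filter_bits (fun x => anfEval (fun S => ρ (k S)) x ≠ 0)]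
    exact two_pow_le_two_pow_mul_card_anfEval_ne_zero hk hdeg
  have hT : ∀ i ∈ T, v i ≠ 0 ∧ 2 ^ t ∣ (v i).val := by
    intro i hi
    rw [show v i = 2 ^ t * anfVec h m k i from anfVec_const_mul _ _ _]
    refine ⟨two_pow_mul_ne_zero_of_map_ne_zero ρ ht ?_, two_pow_dvd_val_two_pow_mul ht.le _⟩
    rw [map_anfVec]
    exact (mem_filter.1 hi).2
  constructor
  · refine hRM.trans (Nat.mul_le_mul_left _ (card_le_card fun i hi => ?_))
    simpa using (hT i hi).1
  · calc 2 ^ m * 2 ^ t ≤ 2 ^ D * #T * 2 ^ t := Nat.mul_le_mul_right _ hRM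
      _ = 2 ^ D * ∑ i ∈ T, 2 ^ t := by rw [sum_const, smul_eq_mul, mul_assoc]
      _ ≤ 2 ^ D * wtL v := by
        refine Nat.mul_le_mul_left _ ((sum_le_sum fun i hi => ?_).trans
          (sum_le_sum_of_subset (subset_univ T)))
        exact two_pow_le_min_val ht.le (hT i hi).1 (hT i hi).2

theorem map_eq_zero_of_mem_zrmCoeffs {t : ℕ} (ρ : ZMod (2 ^ h) →+* ZMod 2) (ht : t < h)
    {c k : Finset (Fin m) → ZMod (2 ^ h)} (hc : c ∈ zrmCoeffs h p r m)
    (hck : ∀ S, c S = 2 ^ t * k S) {S : Finset (Fin m)} (hS : min r (r - p + t) < #S) :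
    ρ (k S) = 0 := by
  rcases lt_or_ge r #S with hr | hr
  · exact map_eq_zero_of_two_pow_mul_eq ρ ht ht (u := 0) (by rw [mul_zero, ← hck, (hc S).1 hr])
  · obtain ⟨u, hu⟩ := (hc S).2 (by omega) hr
    exact map_eq_zero_of_two_pow_mul_eq ρ ht (by omega) ((hck S).symm.trans hu)

/-- The minimum Hamming distance `2 ^ (m - r)` and Lee distance `2 ^ (m - r + p)` of
`ZRM_{2^h}^p(r, m)`, in a form free of truncated subtraction. -/
theorem weight_bounds_of_mem_ZRM (hpr : p ≤ r) {v : Fin (2 ^ m) → ZMod (2 ^ h)}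
    (hv : v ∈ ZRM h p r m) (hv0 : v ≠ 0) :
    2 ^ m ≤ 2 ^ r * #{i | v i ≠ 0} ∧ 2 ^ (m + p) ≤ 2 ^ r * wtL v := by
  obtain ⟨c, hc, rfl⟩ := hv
  have hc0 : c ≠ 0 := by
    rintro rfl
    exact hv0 (funext fun i => by simp [anfVec])
  have hh : h ≠ 0 := by
    rintro rfl
    exact hc0 (funext fun S => (ZMod.val_eq_zero _).1 (Nat.lt_one_iff.1 (ZMod.val_lt (c S))))
  set ρ := ZMod.castHom (dvd_pow_self 2 hh) (ZMod 2)
  obtain ⟨t, ht, k, hck, S₀, hS₀⟩ := exists_eq_two_pow_mul ρ hc0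
  obtain ⟨hH, hL⟩ := weight_bounds_anfVec_two_pow_mul ρ ht (fun h0 => hS₀ (congrFun h0 S₀))
    fun S hS => map_eq_zero_of_mem_zrmCoeffs ρ ht hc hck hS
  rw [show c = fun S => 2 ^ t * k S from funext hck]
  set L := wtL (anfVec h m fun S => 2 ^ t * k S)
  refine ⟨hH.trans (Nat.mul_le_mul_right _ (Nat.pow_le_pow_right two_pos (min_le_left ..))), ?_⟩
  refine Nat.le_of_mul_le_mul_right ?_ (Nat.two_pow_pos t)
  calc 2 ^ (m + p) * 2 ^ t = 2 ^ m * 2 ^ t * 2 ^ p := by ring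
    _ ≤ 2 ^ (r - p + t) * L * 2 ^ p := Nat.mul_le_mul_right _ (hL.trans
      (Nat.mul_le_mul_right _ (Nat.pow_le_pow_right two_pos (min_le_right _ _))))
    _ = 2 ^ r * L * 2 ^ t := by
      rw [mul_right_comm, ← pow_add, show r - p + t + p = r + t by omega, pow_add]
      ring

end ZRM

section ClassII

variable {h m : ℕ} {π : ℕ → Fin m}

theorem ne_succ_of_injOn (hπ : Set.InjOn π (Set.Iio m)) {α : ℕ} (hα : α ∈ range (m - 1)) :
    π α ≠ π (α + 1) := by
  rw [mem_range] at hα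
  intro hEq
  have := hπ (Set.mem_Iio.2 (by omega)) (Set.mem_Iio.2 (by omega)) hEq
  omega

theorem bVec'_eq_anfVec (hπ : Set.InjOn π (Set.Iio m)) :
    bVec' h m π =
      anfVec h m (∑ α ∈ range (m - 1), Pi.single {π α, π (α + 1)} (2 ^ (h - 1))) := by
  funext i
  change _ = anfVecHom h m _ i
  rw [map_sum, Finset.sum_apply]
  simp only [anfVecHom, AddMonoidHom.mk'_apply, anfVec_single, bVec', Nat.cast_mul, Nat.cast_pow,
    Nat.cast_sum, mul_sum]
  refine sum_congr rfl fun α hα => ?_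
  rw [prod_pair (ne_succ_of_injOn hπ hα)]
  push_cast
  rfl

theorem bVec'_mem_ZRM {p : ℕ} (hπ : Set.InjOn π (Set.Iio m)) (hp : p ≤ 2) (hph : p < h) :
    bVec' h m π ∈ ZRM h p 2 m := by
  rw [ZRM_eq_map, bVec'_eq_anfVec hπ]
  refine AddSubgroup.mem_map_of_mem _ (sum_mem fun α hα => ?_)
  have hcard := card_pair (ne_succ_of_injOn hπ hα)
  exact single_two_pow_mem_zrmCoeffs hcard.le (by omega)

end ClassII

/-- Class II codes with `k = 0`, `r = 1`: the union over all permutations `π` of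
`{0,…,m-1}` of the cosets `b'_π + ZRM_{2^h}^p(1,m)` is contained in `ZRM_{2^h}^{p+1}(2,m)`,
hence has minimum Hamming distance at least `2^{m-2}` and minimum Lee distance at least
`2^{m-1+p}`.  (Definedness of `ZRM_{2^h}^p(1,m)` requires `p ≤ 1`, and `h > p+1`.) -/
theorem stmt_16 (h p m : ℕ) (hph : p + 1 < h) (hp1 : p ≤ 1) (hm : 2 ≤ m) :
    (∀ w, (∃ π : ℕ → Fin m, Set.InjOn π (Set.Iio m) ∧ π '' Set.Iio m = Set.univ ∧
        ∃ a ∈ ZRM h p 1 m, w = bVec' h m π + a) →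
      w ∈ ZRM h (p + 1) 2 m) ∧
    (∀ u v : Fin (2 ^ m) → ZMod (2 ^ h),
      (∃ π : ℕ → Fin m, Set.InjOn π (Set.Iio m) ∧ π '' Set.Iio m = Set.univ ∧
        ∃ a ∈ ZRM h p 1 m, u = bVec' h m π + a) →
      (∃ π : ℕ → Fin m, Set.InjOn π (Set.Iio m) ∧ π '' Set.Iio m = Set.univ ∧
        ∃ a ∈ ZRM h p 1 m, v = bVec' h m π + a) →
      u ≠ v →
      2 ^ (m - 2) ≤ distH u v ∧ 2 ^ (m - 1 + p) ≤ wtL (u - v)) := by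
  have classII_subset : ∀ w, (∃ π : ℕ → Fin m, Set.InjOn π (Set.Iio m) ∧
      π '' Set.Iio m = Set.univ ∧ ∃ a ∈ ZRM h p 1 m, w = bVec' h m π + a) →
      w ∈ ZRM h (p + 1) 2 m := by
    rintro w ⟨π, hπ, -, a, ha, rfl⟩
    exact add_mem_ZRM (bVec'_mem_ZRM hπ (by omega) hph) (ZRM_subset_succ_succ ha)
  refine ⟨classII_subset, fun u v hu hv huv => ?_⟩
  obtain ⟨hH, hL⟩ := weight_bounds_of_mem_ZRM (by omega)
    (sub_mem_ZRM (classII_subset u hu) (classII_subset v hv)) (sub_ne_zero.2 huv)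
  have hdist : distH u v = #{i | (u - v) i ≠ 0} := by simp [distH, sub_eq_zero]
  refine ⟨hdist ▸ Nat.two_pow_sub_le_of_two_pow_le_mul hH, ?_⟩
  rw [show m - 1 + p = m + (p + 1) - 2 by omega]
  exact Nat.two_pow_sub_le_of_two_pow_le_mul hL
end

section
/- Let q = 2^h, h > p > 0, and k + 2 ≤ m. The Class III code C = ∪_{b ∈ R_{2^h}(k,m)} { b + a : a ∈ A_{2^h}^{p-1}(k,k+1,m) } is contained in ZRM_{2^h}^p(k+2,m), and consequently for any two distinct codewords u, v ∈ C, the Hamming distance between u and v is at least 2^{m-k-2} and the Lee distance is at least 2^{m-k-2+p}. -/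
open Finset

/-- The linear code `L_{2^h}(k,m)`. -/
def LCode (h m k : ℕ) (iI : ℕ → Fin m) (jJ : Fin k → Fin m) :
    Set (Fin (2 ^ m) → ZMod (2 ^ h)) :=
  {v | ∃ (g : ℕ → (Fin k → ZMod 2) → ZMod (2 ^ h)) (g' : (Fin k → ZMod 2) → ZMod (2 ^ h)),
    v = fun i =>
      (∑ α ∈ Finset.range (m - k),
          ((bits m i.val (iI α)).val : ZMod (2 ^ h)) * g α (fun b => bits m i.val (jJ b)))
        + g' (fun b => bits m i.val (jJ b))}

/-- The function `b` defining the coset representatives in `R_{2^h}(k,m)`. -/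
def bFun (h m k : ℕ) (jJ : Fin k → Fin m) (π : (Fin k → ZMod 2) → ℕ → Fin m)
    (y : Fin m → ZMod 2) : ZMod (2 ^ h) :=
  ((2 ^ (h - 1) * ∑ d : Fin k → ZMod 2,
      (∑ α ∈ Finset.range (m - k - 1), (y (π d α)).val * (y (π d (α + 1))).val)
        * ∏ b : Fin k, (y (jJ b)).val ^ (d b).val * (1 - (y (jJ b)).val) ^ (1 - (d b).val)
    : ℕ) : ZMod (2 ^ h))

/-- The set `R_{2^h}(k,m)` of coset representatives. -/
def RCode (h m k : ℕ) (iI : ℕ → Fin m) (jJ : Fin k → Fin m) :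
    Set (Fin (2 ^ m) → ZMod (2 ^ h)) :=
  {v | ∃ π : (Fin k → ZMod 2) → ℕ → Fin m,
    (∀ d, Set.InjOn (π d) (Set.Iio (m - k)) ∧
      (π d) '' Set.Iio (m - k) = iI '' Set.Iio (m - k)) ∧
    v = fun i => bFun h m k jJ π (bits m i.val)}

/-! The coset representative `b` is `2^(h-1)` times a sum of products, each of which depends
only on the at most `k + 2` coordinates `π_d(α), π_d(α+1), j_0, …, j_{k-1}`. The algebraic normal
form of a function of the coordinates in `U` (its Möbius transform on the subset lattice) is
supported on subsets of `U`, so `b ∈ 2^(h-1) · RM(k+2, m) ⊆ ZRM^p(k+2, m)` because `p < h`; and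
`A^{p-1}(k, k+1, m) ⊆ ZRM^(p-1)(k+1, m) ⊆ ZRM^p(k+2, m)`.

For the distances, write a nonzero `w ∈ ZRM^p(r, m)` as `2^t` times a function whose ANF
coefficients are not all even. Reduced modulo `2^(t+1)` it becomes a nonzero function of degree at
most `r - p + min t p`, which by the Reed–Muller bound (the `(u | u + v)` induction, valid over any
abelian group) is nonzero at `2^(m - r + p - min t p)` points at least; at each of them `w` is
nonzero, divisible by `2^t`, and hence of Lee weight at least `2^t`. -/

section SubsetLattice

variable {ι R : Type*} [CommRing R]

/-- The value, at the indicator point of `T`, of the function with ANF coefficients `c`;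
`subsetMobius` below is its inverse. -/
def subsetZeta {M : Type*} [AddCommMonoid M] (c : Finset ι → M) (T : Finset ι) : M :=
  ∑ S ∈ T.powerset, c S

def subsetMobius (f : Finset ι → R) (S : Finset ι) : R :=
  ∑ T ∈ S.powerset, (-1) ^ (#S - #T) * f T

lemma subsetMobius_const_mul (a : R) (f : Finset ι → R) (S : Finset ι) :
    subsetMobius (fun T => a * f T) S = a * subsetMobius f S := by
  simp only [subsetMobius, mul_sum, mul_left_comm]

lemma subsetMobius_sum {J : Type*} (s : Finset J) (f : J → Finset ι → R) (S : Finset ι) :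
    subsetMobius (fun T => ∑ j ∈ s, f j T) S = ∑ j ∈ s, subsetMobius (f j) S := by
  simp only [subsetMobius, mul_sum]
  exact sum_comm

variable [DecidableEq ι]

lemma subsetZeta_insert {M : Type*} [AddCommMonoid M] (c : Finset ι → M) {x : ι} {T : Finset ι}
    (hx : x ∉ T) :
    subsetZeta c (insert x T) = subsetZeta c T + subsetZeta (fun S => c (insert x S)) T :=
  sum_powerset_insert hx c

lemma subsetMobius_insert (f : Finset ι → R) {x : ι} {S : Finset ι} (hx : x ∉ S) :
    subsetMobius f (insert x S) = subsetMobius (fun T => f (insert x T)) S - subsetMobius f S := by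
  rw [subsetMobius, sum_powerset_insert hx, subsetMobius, subsetMobius, sub_eq_neg_add,
    ← sum_neg_distrib]
  congr 1 <;> refine sum_congr rfl fun T hT => ?_ <;>
    have hTS := card_le_card (mem_powerset.mp hT)
  · rw [card_insert_of_notMem hx, Nat.sub_add_comm hTS, pow_succ]; ring
  · rw [card_insert_of_notMem hx, card_insert_of_notMem (fun h => hx (mem_powerset.mp hT h)),
      Nat.add_sub_add_right]

theorem subsetZeta_subsetMobius (f : Finset ι → R) (T : Finset ι) :
    subsetZeta (subsetMobius f) T = f T := by
  induction T using Finset.induction_on generalizing f with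
  | empty => simp [subsetZeta, subsetMobius]
  | insert x T hx ih =>
    have hterm : ∀ S ∈ T.powerset, subsetMobius f (insert x S) =
        subsetMobius (fun S => f (insert x S)) S - subsetMobius f S :=
      fun S hS => subsetMobius_insert f fun h => hx (mem_powerset.mp hS h)
    rw [subsetZeta_insert _ hx]
    unfold subsetZeta at ih ⊢
    rw [sum_congr rfl hterm, sum_sub_distrib, ih, ih]
    abel

theorem subsetMobius_eq_zero_of_forall_insert_eq {f : Finset ι → R} {x : ι}
    (hf : ∀ T, f (insert x T) = f T) {S : Finset ι} (hxS : x ∈ S) : subsetMobius f S = 0 := by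
  rw [← insert_erase hxS, subsetMobius_insert f (notMem_erase x S)]
  simp [hf]

theorem subsetMobius_eq_zero_of_card_lt {f : Finset ι → R} {U : Finset ι}
    (hU : ∀ x ∉ U, ∀ T, f (insert x T) = f T) {S : Finset ι} (hS : #U < #S) :
    subsetMobius f S = 0 := by
  obtain ⟨x, hxS, hxU⟩ := exists_mem_notMem_of_card_lt_card hS
  exact subsetMobius_eq_zero_of_forall_insert_eq (hU x hxU) hxS

end SubsetLattice
section ReedMuller

variable {ι M : Type*} [DecidableEq ι] [AddCommGroup M] [DecidableEq M]

lemma card_filter_powerset_insert {x : ι} {V : Finset ι} (hx : x ∉ V) (P : Finset ι → Prop)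
    [DecidablePred P] :
    #{T ∈ (insert x V).powerset | P T} =
      #{T ∈ V.powerset | P T} + #{T ∈ V.powerset | P (insert x T)} := by
  simp only [card_filter]
  exact sum_powerset_insert hx _

lemma card_subsetZeta_insert_ne_zero_le {x : ι} {V : Finset ι} (hx : x ∉ V)
    (c : Finset ι → M) :
    #{T ∈ V.powerset | subsetZeta (fun S => c (insert x S)) T ≠ 0} ≤
      #{T ∈ (insert x V).powerset | subsetZeta c T ≠ 0} := by
  rw [card_filter_powerset_insert hx]
  refine (card_le_card fun T hT => ?_).trans (card_union_le _ _)
  simp only [mem_union, mem_filter] at hT ⊢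
  by_contra! h
  have hxT : x ∉ T := fun hxT => hx (mem_powerset.mp hT.1 hxT)
  exact hT.2 (by simpa [subsetZeta_insert c hxT, h.1 hT.1] using h.2 hT.1)

lemma card_subsetZeta_ne_zero_insert_eq {x : ι} {V : Finset ι} (hx : x ∉ V)
    {c : Finset ι → M} (hc : ∀ S ⊆ V, c (insert x S) = 0) :
    #{T ∈ (insert x V).powerset | subsetZeta c T ≠ 0} =
      2 * #{T ∈ V.powerset | subsetZeta c T ≠ 0} := by
  rw [card_filter_powerset_insert hx, two_mul]
  congr 2
  refine filter_congr fun T hT => ?_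
  have hzero : subsetZeta (fun S => c (insert x S)) T = 0 :=
    sum_eq_zero fun S hS => hc S ((mem_powerset.mp hS).trans (mem_powerset.mp hT))
  rw [subsetZeta_insert c fun hxT => hx (mem_powerset.mp hT hxT), hzero, add_zero]

theorem two_pow_le_card_subsetZeta_ne_zero (V : Finset ι) (r : ℕ) (c : Finset ι → M)
    (hdeg : ∀ S ⊆ V, r < #S → c S = 0) (hc : ∃ S ⊆ V, c S ≠ 0) :
    2 ^ (#V - r) ≤ #{T ∈ V.powerset | subsetZeta c T ≠ 0} := by
  induction V using Finset.induction_on generalizing r c with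
  | empty =>
    obtain ⟨S, hS, hcS⟩ := hc
    rw [subset_empty.mp hS] at hcS
    calc 2 ^ (#(∅ : Finset ι) - r) = 1 := by simp
      _ ≤ _ := card_pos.mpr ⟨∅, mem_filter.mpr ⟨by simp, by simpa [subsetZeta] using hcS⟩⟩
  | insert x V hx ih =>
    rw [card_insert_of_notMem hx]
    by_cases hc' : ∃ S ⊆ V, c (insert x S) ≠ 0
    · obtain ⟨S, hSV, hcS⟩ := hc'
      have hcard : ∀ S ⊆ V, #(insert x S) = #S + 1 :=
        fun S hS => card_insert_of_notMem fun h => hx (hS h)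
      have hr : #S + 1 ≤ r := by
        by_contra! hlt
        exact hcS (hdeg _ (insert_subset_insert x hSV) (by rwa [hcard S hSV]))
      calc 2 ^ (#V + 1 - r) ≤ 2 ^ (#V - (r - 1)) := Nat.pow_le_pow_right two_pos (by omega)
        _ ≤ _ := ih (r - 1) _ (fun S hS hlt => hdeg _ (insert_subset_insert x hS)
            (by rw [hcard S hS]; omega)) ⟨S, hSV, hcS⟩
        _ ≤ _ := card_subsetZeta_insert_ne_zero_le hx c
    · push Not at hc'
      have hcV : ∃ S ⊆ V, c S ≠ 0 := by
        obtain ⟨S, hS, hcS⟩ := hc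
        by_cases hxS : x ∈ S
        · refine absurd ?_ hcS
          rw [← insert_erase hxS]
          exact hc' _ (subset_insert_iff.mp hS)
        · exact ⟨S, (subset_insert_iff_of_notMem hxS).mp hS, hcS⟩
      rw [card_subsetZeta_ne_zero_insert_eq hx hc']
      calc 2 ^ (#V + 1 - r) ≤ 2 * 2 ^ (#V - r) := by
            rw [← pow_succ']; exact Nat.pow_le_pow_right two_pos (by omega)
        _ ≤ _ := Nat.mul_le_mul_left 2
            (ih r c (fun S hS => hdeg S (hS.trans (subset_insert x V))) hcV)

end ReedMuller

section BooleanCube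

def bitSet (m : ℕ) (i : Fin (2 ^ m)) : Finset (Fin m) := {v | i.val.testBit v}

lemma bitSet_injective (m : ℕ) : Function.Injective (bitSet m) := by
  intro i j hij
  refine Fin.ext (Nat.eq_of_testBit_eq fun n => ?_)
  by_cases hn : n < m
  · simpa [bitSet] using congrArg (⟨n, hn⟩ ∈ ·) hij
  · have hpow : 2 ^ m ≤ 2 ^ n := Nat.pow_le_pow_right two_pos (not_lt.mp hn)
    rw [Nat.testBit_eq_false_of_lt (i.isLt.trans_le hpow),
      Nat.testBit_eq_false_of_lt (j.isLt.trans_le hpow)]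

lemma bitSet_bijective (m : ℕ) : Function.Bijective (bitSet m) :=
  (Fintype.bijective_iff_injective_and_card _).mpr ⟨bitSet_injective m, by simp⟩

lemma bits_eq_ite_mem_bitSet (m : ℕ) (i : Fin (2 ^ m)) :
    bits m i.val = fun v => if v ∈ bitSet m i then 1 else 0 := by
  funext v
  simp [bits, bitSet]

variable {h m : ℕ}

lemma anfVec_apply (c : Finset (Fin m) → ZMod (2 ^ h)) (i : Fin (2 ^ m)) :
    anfVec h m c i = subsetZeta c (bitSet m i) := by
  have hval : ∀ v, ((bits m i.val v).val : ZMod (2 ^ h)) = if v ∈ bitSet m i then 1 else 0 := by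
    intro v
    by_cases hv : v ∈ bitSet m i <;>
      simp [bits_eq_ite_mem_bitSet, hv, ZMod.val_one 2, -ZMod.natCast_val]
  simp only [anfVec, hval, prod_boole, mul_ite, mul_one, mul_zero, sum_ite, sum_const_zero,
    add_zero, subsetZeta, ← filter_subset_univ]
  congr 1
  ext S
  simp [subset_iff]

lemma sum_comp_anfVec {M : Type*} [AddCommMonoid M] (g : ZMod (2 ^ h) → M)
    (c : Finset (Fin m) → ZMod (2 ^ h)) :
    ∑ i, g (anfVec h m c i) = ∑ T, g (subsetZeta c T) :=
  Fintype.sum_bijective _ (bitSet_bijective m) _ _ fun i => by rw [anfVec_apply]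

end BooleanCube

section TwoAdic

lemma dvd_val_iff_castHom_eq_zero {n N : ℕ} [NeZero N] (hnN : n ∣ N) (x : ZMod N) :
    n ∣ x.val ↔ ZMod.castHom hnN (ZMod n) x = 0 := by
  rw [ZMod.castHom_apply, ZMod.cast_eq_val, ZMod.natCast_eq_zero_iff]

lemma dvd_val_sum {n N : ℕ} [NeZero N] (hnN : n ∣ N) {α : Type*} (s : Finset α)
    (f : α → ZMod N) (hf : ∀ a ∈ s, n ∣ (f a).val) : n ∣ (∑ a ∈ s, f a).val := by
  simp only [dvd_val_iff_castHom_eq_zero hnN, map_sum] at hf ⊢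
  exact sum_eq_zero hf

lemma pow_le_min_val_of_dvd {h t : ℕ} {x : ZMod (2 ^ h)} (hx : x ≠ 0) (ht : 2 ^ t ∣ x.val) :
    2 ^ t ≤ min x.val (2 ^ h - x.val) := by
  have hpos : 0 < x.val := ZMod.val_pos.mpr hx
  have hlt : x.val < 2 ^ h := ZMod.val_lt x
  have htx : 2 ^ t ≤ x.val := Nat.le_of_dvd hpos ht
  have hth : t ≤ h := ((Nat.pow_lt_pow_iff_right one_lt_two).mp (htx.trans_lt hlt)).le
  exact le_min htx (Nat.le_of_dvd (by omega) (Nat.dvd_sub (pow_dvd_pow 2 hth) ht))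

lemma exists_pow_dvd_forall_and_not_dvd {α : Type*} {b : ℕ} (hb : 1 < b) (f : α → ℕ)
    (hf : ∃ a, f a ≠ 0) : ∃ t, (∀ a, b ^ t ∣ f a) ∧ ∃ a, ¬ b ^ (t + 1) ∣ f a := by
  classical
  obtain ⟨a, ha⟩ := hf
  have hex : ∃ n, ∃ a, ¬ b ^ (n + 1) ∣ f a :=
    ⟨f a, a, fun hd => ha (Nat.eq_zero_of_dvd_of_lt hd
      ((Nat.lt_pow_self hb).trans (Nat.pow_lt_pow_right hb (Nat.lt_succ_self _))))⟩
  refine ⟨Nat.find hex, fun a' => ?_, Nat.find_spec hex⟩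
  rcases hn : Nat.find hex with _ | n
  · simp
  · by_contra hnd
    exact Nat.find_min hex (by omega : n < Nat.find hex) ⟨a', hnd⟩

lemma exists_two_pow_dvd_val_and_not_dvd {h : ℕ} {α : Type*} {c : α → ZMod (2 ^ h)}
    (hc : ∃ a, c a ≠ 0) :
    ∃ t, t + 1 ≤ h ∧ (∀ a, 2 ^ t ∣ (c a).val) ∧ ∃ a, ¬ 2 ^ (t + 1) ∣ (c a).val := by
  obtain ⟨t, hdvd, a, ha⟩ := exists_pow_dvd_forall_and_not_dvd one_lt_two (fun a => (c a).val)
    (hc.imp fun a => (ZMod.val_ne_zero _).mpr)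
  refine ⟨t, ?_, hdvd, a, ha⟩
  by_contra! hht
  have hlt : (c a).val < 2 ^ t :=
    (ZMod.val_lt _).trans_le (Nat.pow_le_pow_right two_pos (by omega))
  exact ha (by rw [Nat.eq_zero_of_dvd_of_lt (hdvd a) hlt]; exact dvd_zero _)

end TwoAdic

namespace zrmCond

variable {h p r m : ℕ} {c c' : Finset (Fin m) → ZMod (2 ^ h)}

lemma add (hc : zrmCond h p r m c) (hc' : zrmCond h p r m c') : zrmCond h p r m (c + c') := by
  intro S
  refine ⟨fun hr => by simp [(hc S).1 hr, (hc' S).1 hr], fun h₁ h₂ => ?_⟩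
  obtain ⟨u, hu⟩ := (hc S).2 h₁ h₂
  obtain ⟨u', hu'⟩ := (hc' S).2 h₁ h₂
  exact ⟨u + u', by simp [hu, hu', mul_add]⟩

lemma sub (hc : zrmCond h p r m c) (hc' : zrmCond h p r m c') : zrmCond h p r m (c - c') := by
  intro S
  refine ⟨fun hr => by simp [(hc S).1 hr, (hc' S).1 hr], fun h₁ h₂ => ?_⟩
  obtain ⟨u, hu⟩ := (hc S).2 h₁ h₂
  obtain ⟨u', hu'⟩ := (hc' S).2 h₁ h₂
  exact ⟨u - u', by simp [hu, hu', mul_sub]⟩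

lemma succ (hc : zrmCond h p r m c) : zrmCond h (p + 1) (r + 1) m c := by
  intro S
  refine ⟨fun hr => (hc S).1 (by omega), fun h₁ h₂ => ?_⟩
  rw [Nat.add_sub_add_right] at h₁ ⊢
  rcases h₂.lt_or_eq with hlt | heq
  · exact (hc S).2 h₁ (by omega)
  · exact ⟨0, by rw [(hc S).1 (by omega), mul_zero]⟩

lemma of_eq_two_pow_pred_mul (hph : p < h) (hdeg : ∀ S : Finset (Fin m), r < #S → c S = 0)
    (hmul : ∀ S, ∃ u, c S = 2 ^ (h - 1) * u) : zrmCond h p r m c := by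
  refine fun S => ⟨hdeg S, fun _ hSr => ?_⟩
  obtain ⟨u, hu⟩ := hmul S
  refine ⟨2 ^ (h - 1 - (#S - (r - p))) * u, ?_⟩
  rw [hu, ← mul_assoc, ← pow_add]
  congr 2
  omega

lemma castHom_eq_zero (hc : zrmCond h p r m c) {t : ℕ} (ht : t + 1 ≤ h) {S : Finset (Fin m)}
    (hS : r - p + min t p < #S) :
    ZMod.castHom (pow_dvd_pow 2 ht) (ZMod (2 ^ (t + 1))) (c S) = 0 := by
  rcases lt_or_ge r #S with hr | hr
  · rw [(hc S).1 hr, map_zero]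
  · obtain ⟨u, hu⟩ := (hc S).2 (by omega) hr
    obtain ⟨j, hj⟩ : ∃ j, #S - (r - p) = j + (t + 1) := ⟨#S - (r - p) - (t + 1), by omega⟩
    have h0 : (2 : ZMod (2 ^ (t + 1))) ^ (t + 1) = 0 := by
      exact_mod_cast ZMod.natCast_self (2 ^ (t + 1))
    rw [hu, hj, map_mul, map_pow, map_ofNat, pow_add (2 : ZMod (2 ^ (t + 1))) j, h0, mul_zero,
      zero_mul]

theorem two_pow_le_card_and_sum_lee (hpr : p ≤ r) (hrm : r ≤ m) (hc : zrmCond h p r m c)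
    (hne : ∃ S, c S ≠ 0) :
    2 ^ (m - r) ≤ #{T | subsetZeta c T ≠ 0} ∧
      2 ^ (m - r + p) ≤ ∑ T, min (subsetZeta c T).val (2 ^ h - (subsetZeta c T).val) := by
  obtain ⟨t, hth, hdvd, S₀, hS₀⟩ := exists_two_pow_dvd_val_and_not_dvd hne
  set κ := ZMod.castHom (pow_dvd_pow 2 hth) (ZMod (2 ^ (t + 1)))
  set G : Finset (Finset (Fin m)) := {T | subsetZeta (fun S => κ (c S)) T ≠ 0}
  have hG : 2 ^ (m - (r - p + min t p)) ≤ #G := by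
    simpa using two_pow_le_card_subsetZeta_ne_zero univ (r - p + min t p) (fun S => κ (c S))
      (fun S _ hS => hc.castHom_eq_zero hth hS)
      ⟨S₀, subset_univ _, (dvd_val_iff_castHom_eq_zero _ _).not.mp hS₀⟩
  have hgood : ∀ T ∈ G, subsetZeta c T ≠ 0 ∧ 2 ^ t ∣ (subsetZeta c T).val := by
    intro T hT
    refine ⟨fun h0 => (mem_filter.mp hT).2 ?_, dvd_val_sum (pow_dvd_pow 2 (by omega)) _ _
      fun S _ => hdvd S⟩
    rw [subsetZeta, ← map_sum, ← subsetZeta, h0, map_zero]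
  constructor
  · calc 2 ^ (m - r) ≤ 2 ^ (m - (r - p + min t p)) := Nat.pow_le_pow_right two_pos (by omega)
      _ ≤ #G := hG
      _ ≤ _ := card_le_card fun T hT => mem_filter.mpr ⟨mem_univ _, (hgood T hT).1⟩
  · calc 2 ^ (m - r + p) ≤ 2 ^ (m - (r - p + min t p)) * 2 ^ t := by
          rw [← pow_add]; exact Nat.pow_le_pow_right two_pos (by omega)
      _ ≤ #G * 2 ^ t := Nat.mul_le_mul_right _ hG
      _ = ∑ T ∈ G, 2 ^ t := by rw [sum_const, smul_eq_mul]
      _ ≤ ∑ T ∈ G, min (subsetZeta c T).val (2 ^ h - (subsetZeta c T).val) :=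
          sum_le_sum fun T hT => pow_le_min_val_of_dvd (hgood T hT).1 (hgood T hT).2
      _ ≤ _ := sum_le_sum_of_subset (subset_univ _)

end zrmCond

lemma anfVec_add {h m : ℕ} (c c' : Finset (Fin m) → ZMod (2 ^ h)) :
    anfVec h m (c + c') = anfVec h m c + anfVec h m c' := by
  funext i
  simp [anfVec, add_mul, sum_add_distrib]

lemma anfVec_sub {h m : ℕ} (c c' : Finset (Fin m) → ZMod (2 ^ h)) :
    anfVec h m (c - c') = anfVec h m c - anfVec h m c' := by
  funext i
  simp [anfVec, sub_mul, sum_sub_distrib]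

namespace ZRM

variable {h p r m : ℕ}

lemma add_mem {u v : Fin (2 ^ m) → ZMod (2 ^ h)} (hu : u ∈ ZRM h p r m) (hv : v ∈ ZRM h p r m) :
    u + v ∈ ZRM h p r m := by
  obtain ⟨c, hc, rfl⟩ := hu
  obtain ⟨c', hc', rfl⟩ := hv
  exact ⟨c + c', hc.add hc', (anfVec_add c c').symm⟩

lemma sub_mem {u v : Fin (2 ^ m) → ZMod (2 ^ h)} (hu : u ∈ ZRM h p r m) (hv : v ∈ ZRM h p r m) :
    u - v ∈ ZRM h p r m := by
  obtain ⟨c, hc, rfl⟩ := hu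
  obtain ⟨c', hc', rfl⟩ := hv
  exact ⟨c - c', hc.sub hc', (anfVec_sub c c').symm⟩

lemma subset_succ : ZRM h p r m ⊆ ZRM h (p + 1) (r + 1) m :=
  fun _ ⟨c, hc, hv⟩ => ⟨c, hc.succ, hv⟩

theorem two_pow_le_card_and_wtL (hpr : p ≤ r) (hrm : r ≤ m) {w : Fin (2 ^ m) → ZMod (2 ^ h)}
    (hw : w ∈ ZRM h p r m) (hw0 : w ≠ 0) :
    2 ^ (m - r) ≤ #{i | w i ≠ 0} ∧ 2 ^ (m - r + p) ≤ wtL w := by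
  obtain ⟨c, hc, rfl⟩ := hw
  have hne : ∃ S, c S ≠ 0 := by
    by_contra! h0
    exact hw0 (funext fun i => by simp [anfVec, h0])
  have hcard : #{i | anfVec h m c i ≠ 0} = #{T | subsetZeta c T ≠ 0} := by
    simpa only [card_filter] using sum_comp_anfVec (fun x => if x ≠ 0 then 1 else 0) c
  rw [hcard, wtL, sum_comp_anfVec (fun x => min x.val (2 ^ h - x.val))]
  exact hc.two_pow_le_card_and_sum_lee hpr hrm hne

end ZRM
section ClassIII

variable {h m k : ℕ} (jJ : Fin k → Fin m) (π : (Fin k → ZMod 2) → ℕ → Fin m)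

def bFunTerm (d : Fin k → ZMod 2) (α : ℕ) (y : Fin m → ZMod 2) : ℕ :=
  (y (π d α)).val * (y (π d (α + 1))).val *
    ∏ b : Fin k, (y (jJ b)).val ^ (d b).val * (1 - (y (jJ b)).val) ^ (1 - (d b).val)

def bFunSupport (d : Fin k → ZMod 2) (α : ℕ) : Finset (Fin m) :=
  insert (π d α) (insert (π d (α + 1)) (univ.image jJ))

lemma bFun_eq_sum (y : Fin m → ZMod 2) :
    bFun h m k jJ π y =
      2 ^ (h - 1) * ∑ d, ∑ α ∈ range (m - k - 1), (bFunTerm jJ π d α y : ZMod (2 ^ h)) := by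
  simp only [bFun, bFunTerm, sum_mul, Nat.cast_mul, Nat.cast_sum, Nat.cast_pow, Nat.cast_ofNat]

lemma card_bFunSupport_le (d : Fin k → ZMod 2) (α : ℕ) : #(bFunSupport jJ π d α) ≤ k + 2 :=
  calc #(bFunSupport jJ π d α) ≤ #(univ.image jJ) + 1 + 1 :=
        (card_insert_le _ _).trans (Nat.add_le_add_right (card_insert_le _ _) 1)
    _ ≤ k + 2 := by have := (card_image_le (s := univ) (f := jJ)).trans_eq (card_fin k); omega

lemma bFunTerm_congr {d : Fin k → ZMod 2} {α : ℕ} {y y' : Fin m → ZMod 2}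
    (hyy' : ∀ v ∈ bFunSupport jJ π d α, y v = y' v) :
    bFunTerm jJ π d α y = bFunTerm jJ π d α y' := by
  have hj : ∀ b, y (jJ b) = y' (jJ b) := fun b => hyy' _ (by simp [bFunSupport])
  simp only [bFunTerm, hyy' (π d α) (by simp [bFunSupport]),
    hyy' (π d (α + 1)) (by simp [bFunSupport]), hj]

theorem bFun_mem_ZRM {p : ℕ} (hph : p < h) :
    (fun i : Fin (2 ^ m) => bFun h m k jJ π (bits m i.val)) ∈ ZRM h p (k + 2) m := by
  set f : Finset (Fin m) → ZMod (2 ^ h) := fun T => bFun h m k jJ π fun v => if v ∈ T then 1 else 0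
  set g : (Fin k → ZMod 2) → ℕ → Finset (Fin m) → ZMod (2 ^ h) :=
    fun d α T => bFunTerm jJ π d α fun v => if v ∈ T then 1 else 0
  have hcoeff : ∀ S, subsetMobius f S =
      2 ^ (h - 1) * ∑ d, ∑ α ∈ range (m - k - 1), subsetMobius (g d α) S := by
    intro S
    simp only [f, bFun_eq_sum, subsetMobius_const_mul, subsetMobius_sum, g]
  have hg : ∀ d α S, k + 2 < #S → subsetMobius (g d α) S = 0 := fun d α S hS =>
    subsetMobius_eq_zero_of_card_lt (U := bFunSupport jJ π d α)
      (fun x hx T => congrArg Nat.cast (bFunTerm_congr jJ π fun v hv => by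
        simp [show v ≠ x from fun h => hx (h ▸ hv)]))
      ((card_bFunSupport_le jJ π d α).trans_lt hS)
  refine ⟨subsetMobius f, zrmCond.of_eq_two_pow_pred_mul hph (fun S hS => ?_)
    (fun S => ⟨_, hcoeff S⟩), ?_⟩
  · simp [hcoeff, hg _ _ S hS]
  · funext i
    rw [anfVec_apply, subsetZeta_subsetMobius, bits_eq_ite_mem_bitSet]

end ClassIII

theorem stmt_17_general (h p m k : ℕ) (hph : p < h) (hp : 0 < p) (hpk : p ≤ k + 2) (hkm : k + 2 ≤ m)
    (iI : ℕ → Fin m) (jJ : Fin k → Fin m) :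
    (∀ w, (∃ b ∈ RCode h m k iI jJ,
        ∃ a ∈ LCode h m k iI jJ ∩ ZRM h (p - 1) (k + 1) m, w = b + a) →
      w ∈ ZRM h p (k + 2) m) ∧
    (∀ u v : Fin (2 ^ m) → ZMod (2 ^ h),
      (∃ b ∈ RCode h m k iI jJ,
        ∃ a ∈ LCode h m k iI jJ ∩ ZRM h (p - 1) (k + 1) m, u = b + a) →
      (∃ b ∈ RCode h m k iI jJ,
        ∃ a ∈ LCode h m k iI jJ ∩ ZRM h (p - 1) (k + 1) m, v = b + a) →
      u ≠ v →
      2 ^ (m - k - 2) ≤ distH u v ∧ 2 ^ (m - k - 2 + p) ≤ wtL (u - v)) := by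
  have hmem : ∀ w, (∃ b ∈ RCode h m k iI jJ,
      ∃ a ∈ LCode h m k iI jJ ∩ ZRM h (p - 1) (k + 1) m, w = b + a) →
      w ∈ ZRM h p (k + 2) m := by
    rintro w ⟨b, ⟨π, -, rfl⟩, a, ⟨-, ha⟩, rfl⟩
    have ha' : a ∈ ZRM h p (k + 2) m := by
      simpa [Nat.sub_add_cancel hp] using ZRM.subset_succ ha
    exact ZRM.add_mem (bFun_mem_ZRM jJ π hph) ha'
  refine ⟨hmem, fun u v hu hv huv => ?_⟩
  have hdist : distH u v = #{i | (u - v) i ≠ 0} := by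
    simp only [distH, Pi.sub_apply, sub_ne_zero]
  rw [hdist, Nat.sub_sub]
  exact ZRM.two_pow_le_card_and_wtL hpk hkm (ZRM.sub_mem (hmem u hu) (hmem v hv))
    (sub_ne_zero.mpr huv)

/-- Class III codes (`p > 0`): the union of the cosets `b + A_{2^h}^{p-1}(k,k+1,m)` over all
`b ∈ R_{2^h}(k,m)` is contained in `ZRM_{2^h}^p(k+2,m)`, hence has minimum Hamming distance
at least `2^{m-k-2}` and minimum Lee distance at least `2^{m-k-2+p}`. -/
theorem stmt_17 (h p m k : ℕ) (hph : p < h) (hp : 0 < p) (hpk : p ≤ k + 2) (hkm : k + 2 ≤ m)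
    (iI : ℕ → Fin m) (jJ : Fin k → Fin m)
    (hiInj : Set.InjOn iI (Set.Iio (m - k))) (hjInj : Function.Injective jJ)
    (hdisj : ∀ a < m - k, ∀ b : Fin k, iI a ≠ jJ b)
    (hcover : ∀ v : Fin m, (∃ a < m - k, iI a = v) ∨ ∃ b : Fin k, jJ b = v) :
    (∀ w, (∃ b ∈ RCode h m k iI jJ,
        ∃ a ∈ LCode h m k iI jJ ∩ ZRM h (p - 1) (k + 1) m, w = b + a) →
      w ∈ ZRM h p (k + 2) m) ∧
    (∀ u v : Fin (2 ^ m) → ZMod (2 ^ h),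
      (∃ b ∈ RCode h m k iI jJ,
        ∃ a ∈ LCode h m k iI jJ ∩ ZRM h (p - 1) (k + 1) m, u = b + a) →
      (∃ b ∈ RCode h m k iI jJ,
        ∃ a ∈ LCode h m k iI jJ ∩ ZRM h (p - 1) (k + 1) m, v = b + a) →
      u ≠ v →
      2 ^ (m - k - 2) ≤ distH u v ∧ 2 ^ (m - k - 2 + p) ≤ wtL (u - v)) :=
  stmt_17_general h p m k hph hp hpk hkm iI jJ
end
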